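/- Assume the pencil (M,N) is self-adjoint with respect to P and N is invertible, so that Λ(M,N) is a nonempty set of real numbers. Then for every μ ∈ ℝ, the infimum over all x ≠ 0 of ‖(M−μN)x‖_P/‖Nx‖_P equals min{|λ − μ| : λ ∈ Λ(M,N)} = dist(μ, Λ(M,N)); moreover this infimum is attained at every x ≠ 0 satisfying Mx = λ*Nx for an eigenvalue λ* ∈ Λ(M,N) nearest to μ. -/

import Mathlib

open Matrix Filter Topology
open scoped ComplexOrder

noncomputable def innerP {n : ℕ} (P : Matrix (Fin n) (Fin n) ℂ) (x y : Fin n → ℂ) : ℂ :=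
  star y ⬝ᵥ P.mulVec x

noncomputable def normP {n : ℕ} (P : Matrix (Fin n) (Fin n) ℂ) (x : Fin n → ℂ) : ℝ :=
  Real.sqrt (innerP P x x).re

noncomputable def rq {n : ℕ} (M N P : Matrix (Fin n) (Fin n) ℂ) (x : Fin n → ℂ) : ℂ :=
  innerP P (M.mulVec x) (N.mulVec x) / innerP P (N.mulVec x) (N.mulVec x)

noncomputable def r0 {n : ℕ} (M N P : Matrix (Fin n) (Fin n) ℂ) (x : Fin n → ℂ) : ℝ :=
  normP P (M.mulVec x - rq M N P x • N.mulVec x) / normP P (N.mulVec x)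

noncomputable def qf {n : ℕ} (M N P : Matrix (Fin n) (Fin n) ℂ) (x : Fin n → ℂ) (μ : ℂ) : ℂ :=
  (innerP P ((M - μ • N).mulVec x) (N.mulVec x) /
      (‖innerP P ((M - μ • N).mulVec x) (N.mulVec x)‖ : ℂ)) *
    ((normP P ((M - μ • N).mulVec x) / normP P (N.mulVec x) : ℝ) : ℂ) + μ

def genSpec {n : ℕ} (M N : Matrix (Fin n) (Fin n) ℂ) : Set ℂ :=
  {l : ℂ | (M - l • N).det = 0}

/-!
Write `P = Qᴴ Q` with `Q` invertible and put `A = (QN)⁻ᴴ (Nᴴ P M) (QN)⁻¹`, which is Hermitian by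
self-adjointness of the pencil and satisfies `A (QN) = Q M`. The substitution `y = QN x` turns
`‖(M - μN)x‖_P / ‖Nx‖_P` into `‖(A - μ)y‖ / ‖y‖` and `det (M - λN) = 0` into `λ ∈ σ(A)`. For
Hermitian `A`, the functional calculus gives `(A - μ)² ≥ dist(μ, σ(A))²` in the Loewner order,
which is the lower bound; equality holds on eigenvectors of a nearest eigenvalue.
-/

variable {n : ℕ}

lemma normP_smul (P : Matrix (Fin n) (Fin n) ℂ) (c : ℂ) (v : Fin n → ℂ) :
    normP P (c • v) = ‖c‖ * normP P v := by
  have h : innerP P (c • v) (c • v) = ((‖c‖ ^ 2 : ℝ) : ℂ) * innerP P v v := by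
    simp only [innerP, star_smul, mulVec_smul, smul_dotProduct, dotProduct_smul, smul_eq_mul,
      Complex.star_def, ← mul_assoc, Complex.mul_conj', Complex.ofReal_pow]
  rw [normP, normP, h, Complex.re_ofReal_mul, Real.sqrt_mul (by positivity),
    Real.sqrt_sq (norm_nonneg c)]

lemma normP_pos {P : Matrix (Fin n) (Fin n) ℂ} (hP : P.PosDef) {v : Fin n → ℂ} (hv : v ≠ 0) :
    0 < normP P v :=
  Real.sqrt_pos.2 (hP.re_dotProduct_pos hv)

lemma normP_conjTranspose_mul_self (Q : Matrix (Fin n) (Fin n) ℂ) (v : Fin n → ℂ) :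
    normP (Qᴴ * Q) v = normP 1 (Q *ᵥ v) := by
  rw [normP, normP, innerP, innerP, ← mulVec_mulVec, dotProduct_mulVec, ← star_mulVec, one_mulVec]

section Hermitian

open scoped MatrixOrder

lemma Matrix.IsHermitian.algebraMap_sq_le_sq_sub {A : Matrix (Fin n) (Fin n) ℂ}
    (hA : A.IsHermitian) {μ d : ℝ} (hd : ∀ x ∈ spectrum ℝ A, d ^ 2 ≤ (x - μ) ^ 2) :
    algebraMap ℝ _ (d ^ 2) ≤ (A - algebraMap ℝ _ μ) ^ 2 := by
  have hA' : IsSelfAdjoint A := hA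
  have hcfc : (A - algebraMap ℝ _ μ) ^ 2 = cfc (fun x => (x - μ) ^ 2) A := by
    rw [cfc_pow .., cfc_sub .., cfc_id' ℝ A, cfc_const μ A]
  rw [hcfc]
  exact (algebraMap_le_cfc_iff _ _ A).2 hd

lemma Matrix.IsHermitian.mul_normP_one_le {A : Matrix (Fin n) (Fin n) ℂ} (hA : A.IsHermitian)
    {μ d : ℝ} (hd : 0 ≤ d) (hspec : ∀ x ∈ spectrum ℝ A, d ≤ |x - μ|) (z : Fin n → ℂ) :
    d * normP 1 z ≤ normP 1 ((A - (μ : ℂ) • 1) *ᵥ z) := by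
  set T := A - (μ : ℂ) • 1 with hT
  have hTμ : T = A - algebraMap ℝ _ μ := by
    rw [hT, Algebra.algebraMap_eq_smul_one, RCLike.real_smul_eq_coe_smul (K := ℂ)]; rfl
  have hTH : Tᴴ = T := by simp [hT, hA.eq, conjTranspose_smul]
  have hpsd : (T ^ 2 - algebraMap ℝ _ (d ^ 2)).PosSemidef := by
    rw [hTμ]
    exact hA.algebraMap_sq_le_sq_sub fun x hx =>
      sq_le_sq.2 (by rw [abs_of_nonneg hd]; exact hspec x hx)
  have hquad := hpsd.dotProduct_mulVec_nonneg z
  rw [sq, ← hTH, sub_mulVec, dotProduct_sub, ← mulVec_mulVec, dotProduct_mulVec, ← star_mulVec,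
    hTH, Algebra.algebraMap_eq_smul_one, smul_mulVec, one_mulVec, dotProduct_smul] at hquad
  have hre : d ^ 2 * (star z ⬝ᵥ z).re ≤ (star (T *ᵥ z) ⬝ᵥ T *ᵥ z).re := by
    have := (Complex.le_def.mp hquad).1
    simp only [Complex.zero_re, Complex.sub_re, Complex.real_smul, Complex.re_ofReal_mul] at this
    linarith
  rw [normP, normP, innerP, innerP, one_mulVec, one_mulVec, ← Real.sqrt_sq hd,
    ← Real.sqrt_mul (sq_nonneg d)]
  exact Real.sqrt_le_sqrt hre

end Hermitian

lemma Matrix.mem_spectrum_real_iff_det_eq_zero (A : Matrix (Fin n) (Fin n) ℂ) (l : ℝ) :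
    l ∈ spectrum ℝ A ↔ (A - (l : ℂ) • 1).det = 0 := by
  rw [← spectrum.algebraMap_mem_iff ℂ, spectrum.mem_iff, ← IsUnit.neg_iff, neg_sub,
    isUnit_iff_isUnit_det, isUnit_iff_ne_zero, not_not, Algebra.algebraMap_eq_smul_one]
  rfl

lemma exists_isHermitian_reduction {M N P : Matrix (Fin n) (Fin n) ℂ}
    (hP : P.PosDef) (hsa : (Nᴴ * P * M).IsHermitian) (hN : IsUnit N) :
    ∃ Q A : Matrix (Fin n) (Fin n) ℂ,
      IsUnit Q ∧ P = Qᴴ * Q ∧ A.IsHermitian ∧ A * (Q * N) = Q * M := by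
  open scoped MatrixOrder in
  obtain ⟨Q, hQ, rfl⟩ : ∃ Q, IsUnit Q ∧ P = star Q * Q :=
    CStarAlgebra.isStrictlyPositive_iff_eq_star_mul_self.mp hP.isStrictlyPositive
  set C := Q * N
  have hC : IsUnit C.det := (isUnit_iff_isUnit_det C).mp (hQ.mul hN)
  refine ⟨Q, C⁻¹ᴴ * (Nᴴ * (Qᴴ * Q) * M) * C⁻¹, hQ, rfl, isHermitian_conjTranspose_mul_mul _ hsa, ?_⟩
  calc C⁻¹ᴴ * (Nᴴ * (Qᴴ * Q) * M) * C⁻¹ * C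
      = C⁻¹ᴴ * Cᴴ * (Q * M) := by
        rw [Matrix.mul_assoc _ C⁻¹, nonsing_inv_mul C hC, Matrix.mul_one, conjTranspose_mul]
        simp only [Matrix.mul_assoc]
    _ = Q * M := by
        rw [← conjTranspose_mul, mul_nonsing_inv C hC, conjTranspose_one, Matrix.one_mul]

section Reduction

variable {M N Q A : Matrix (Fin n) (Fin n) ℂ}

lemma det_sub_smul_eq_zero_iff (hQ : IsUnit Q) (hN : IsUnit N) (hAQ : A * (Q * N) = Q * M)
    (l : ℂ) : (M - l • N).det = 0 ↔ (A - l • 1).det = 0 := by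
  have hconj : Q * (M - l • N) = (A - l • 1) * (Q * N) := by
    rw [Matrix.mul_sub, Matrix.sub_mul, hAQ, Matrix.mul_smul, Matrix.smul_mul, Matrix.one_mul]
  have hdet := congrArg det hconj
  rw [det_mul, det_mul, det_mul] at hdet
  have hQ0 := ((isUnit_iff_isUnit_det Q).mp hQ).ne_zero
  have hN0 := ((isUnit_iff_isUnit_det N).mp hN).ne_zero
  rw [← mul_eq_zero_iff_left hQ0, hdet, mul_eq_zero_iff_right (mul_ne_zero hQ0 hN0)]

lemma setOf_ofReal_mem_genSpec_eq_spectrum (hQ : IsUnit Q) (hN : IsUnit N)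
    (hAQ : A * (Q * N) = Q * M) : {l : ℝ | (l : ℂ) ∈ genSpec M N} = spectrum ℝ A := by
  ext l
  rw [Set.mem_ofPred_eq, genSpec, Set.mem_ofPred_eq, det_sub_smul_eq_zero_iff hQ hN hAQ,
    A.mem_spectrum_real_iff_det_eq_zero]

lemma le_normP_sub_smul_mulVec_div (hQ : IsUnit Q) (hN : IsUnit N) (hA : A.IsHermitian)
    (hAQ : A * (Q * N) = Q * M) {μ d : ℝ} (hd : 0 ≤ d) (hspec : ∀ y ∈ spectrum ℝ A, d ≤ |y - μ|)
    {x : Fin n → ℂ} (hx : x ≠ 0) :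
    d ≤ normP (Qᴴ * Q) ((M - (μ : ℂ) • N) *ᵥ x) / normP (Qᴴ * Q) (N *ᵥ x) := by
  have hQNx : Q *ᵥ (N *ᵥ x) ≠ 0 := by
    simpa [mulVec_mulVec] using (mulVec_injective_iff_isUnit.2 (hQ.mul hN)).ne hx
  have hred : Q *ᵥ ((M - (μ : ℂ) • N) *ᵥ x) = (A - (μ : ℂ) • 1) *ᵥ (Q *ᵥ (N *ᵥ x)) := by
    simp only [mulVec_mulVec, Matrix.mul_sub, Matrix.sub_mul, ← hAQ, Matrix.mul_smul,
      Matrix.smul_mul, Matrix.one_mul]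
  rw [normP_conjTranspose_mul_self, normP_conjTranspose_mul_self, hred,
    le_div_iff₀ (normP_pos PosDef.one hQNx)]
  exact hA.mul_normP_one_le hd hspec _

end Reduction

lemma exists_mulVec_eq_smul_mulVec {M N : Matrix (Fin n) (Fin n) ℂ} {l : ℂ}
    (hl : l ∈ genSpec M N) : ∃ x ≠ 0, M *ᵥ x = l • N *ᵥ x := by
  obtain ⟨x, hx, hMx⟩ := exists_mulVec_eq_zero_iff.mpr hl
  exact ⟨x, hx, by rwa [sub_mulVec, smul_mulVec, sub_eq_zero] at hMx⟩

lemma normP_sub_smul_mulVec_div_eq {M N P : Matrix (Fin n) (Fin n) ℂ} (hP : P.PosDef)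
    {l μ : ℂ} {x : Fin n → ℂ} (hNx : N *ᵥ x ≠ 0) (hMx : M *ᵥ x = l • N *ᵥ x) :
    normP P ((M - μ • N) *ᵥ x) / normP P (N *ᵥ x) = ‖l - μ‖ := by
  rw [sub_mulVec, smul_mulVec, hMx, ← sub_smul, normP_smul,
    mul_div_cancel_right₀ _ (normP_pos hP hNx).ne']
/-- the infimum of `‖(M−μN)x‖_P/‖Nx‖_P` over nonzero `x` equals the distance
from `μ` to the (real) generalized spectrum, attained at eigenvectors of nearest
eigenvalues. -/
theorem stmt_14 {n : ℕ} (hn : 1 ≤ n) (M N P : Matrix (Fin n) (Fin n) ℂ)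
    (hP : P.PosDef) (hsa : (Nᴴ * P * M).IsHermitian) (hN : IsUnit N) (μ : ℝ) :
    sInf {r : ℝ | ∃ x : Fin n → ℂ, x ≠ 0 ∧
        r = normP P ((M - (μ : ℂ) • N).mulVec x) / normP P (N.mulVec x)} =
      sInf ((fun l : ℝ => |l - μ|) '' {l : ℝ | (l : ℂ) ∈ genSpec M N}) ∧
    ∀ lstar : ℝ, (lstar : ℂ) ∈ genSpec M N →
      (∀ l : ℝ, (l : ℂ) ∈ genSpec M N → |lstar - μ| ≤ |l - μ|) →
      ∀ x : Fin n → ℂ, x ≠ 0 → M.mulVec x = (lstar : ℂ) • N.mulVec x →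
        normP P ((M - (μ : ℂ) • N).mulVec x) / normP P (N.mulVec x) = |lstar - μ| := by
  obtain ⟨Q, A, hQ, rfl, hA, hAQ⟩ := exists_isHermitian_reduction hP hsa hN
  have hspec := setOf_ofReal_mem_genSpec_eq_spectrum hQ hN hAQ
  have hratio (l : ℝ) (x : Fin n → ℂ) (hx : x ≠ 0) (hMx : M *ᵥ x = (l : ℂ) • N *ᵥ x) :
      normP (Qᴴ * Q) ((M - (μ : ℂ) • N) *ᵥ x) / normP (Qᴴ * Q) (N *ᵥ x) = |l - μ| := by
    have hNx : N *ᵥ x ≠ 0 := by simpa using (mulVec_injective_iff_isUnit.2 hN).ne hx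
    rw [normP_sub_smul_mulVec_div_eq hP hNx hMx, ← Complex.ofReal_sub, Complex.norm_real,
      Real.norm_eq_abs]
  have : Nonempty (Fin n) := Fin.pos_iff_nonempty.mp hn
  obtain ⟨l₀, hl₀, hmin⟩ := Set.exists_min_image _ (fun l => |l - μ|) A.finite_real_spectrum
    (hA.spectrum_real_eq_range_eigenvalues ▸ Set.range_nonempty _)
  have hl₀' : l₀ ∈ {l : ℝ | (l : ℂ) ∈ genSpec M N} := hspec ▸ hl₀
  obtain ⟨x₀, hx₀, hMx₀⟩ := exists_mulVec_eq_smul_mulVec hl₀'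
  have hquot : IsLeast {r : ℝ | ∃ x : Fin n → ℂ, x ≠ 0 ∧
      r = normP (Qᴴ * Q) ((M - (μ : ℂ) • N) *ᵥ x) / normP (Qᴴ * Q) (N *ᵥ x)} |l₀ - μ| :=
    ⟨⟨x₀, hx₀, (hratio l₀ x₀ hx₀ hMx₀).symm⟩, fun _ ⟨_, hx, hr⟩ =>
      hr ▸ le_normP_sub_smul_mulVec_div hQ hN hA hAQ (abs_nonneg _) hmin hx⟩
  have hdist : IsLeast ((fun l : ℝ => |l - μ|) '' {l : ℝ | (l : ℂ) ∈ genSpec M N}) |l₀ - μ| := by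
    rw [hspec]
    exact ⟨Set.mem_image_of_mem _ hl₀, Set.forall_mem_image.2 hmin⟩
  exact ⟨by rw [hquot.csInf_eq, hdist.csInf_eq], fun l _ _ => hratio l⟩
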